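/- Assume the setting below (either case, i.e. G(X) = X^{q^{m_0}} + (intermediate terms) + C X^{q^k} with m_0 < 2t and also the case m_0 = 2t, C ≠ 0, and F(X) = X + δX^{q^{2t}} with δ ≠ 0, 0 < 2t < k). Then the homogeneous component of F_C(X,Y) of degree q^k + q^{2t} equals λ^{q^t} δ C · (X^{q^{2t}} Y^{q^k} − X^{q^k} Y^{q^{2t}}), and every monomial of F_C has total degree at most q^k + q^{2t}; in particular F_C has total degree exactly q^k + q^{2t}. -/

import Mathlib

/-!
Expanding the determinant along its constant last row gives
`F_C = λ^{q^t} A(F, G) - F(λ) A(X^{q^t}, G) + G(λ) A(X^{q^t}, F)`, where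
`A(u, v) = u(X) v(Y) - v(X) u(Y)`. If `u` and `v` have degree at most `a` and `b`, the degree
`a + b` component of `A(u, v)` is the alternant of the degree `a` and `b` components of `u` and `v`.
The leading forms of `X^{q^t}`, `F` and `G` are `X^{q^t}`, `δ X^{q^{2t}}` and `C X^{q^k}`; since
`q^t < q^{2t} < q^k`, only `A(F, G)` reaches degree `q^k + q^{2t}`, where it contributes
`δ C (X^{q^{2t}} Y^{q^k} - X^{q^k} Y^{q^{2t}})`.
-/

open MvPolynomial

noncomputable section

/-- A `q`-polynomial with coefficient function `g` supported in `[0,k]`, applied to a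
bivariate polynomial. -/
def GPg (q k : ℕ) {Ω : Type*} [Field Ω] (g : ℕ → Ω) (u : MvPolynomial (Fin 2) Ω) :
    MvPolynomial (Fin 2) Ω :=
  ∑ i ∈ Finset.range (k + 1), C (g i) * u ^ q ^ i

/-- Its value at `x`. -/
def Gvalg (q k : ℕ) {Ω : Type*} [Field Ω] (g : ℕ → Ω) (x : Ω) : Ω :=
  ∑ i ∈ Finset.range (k + 1), g i * x ^ q ^ i

/-- `F(x) = x + δ x^(q^(2t))` (value at `x`). -/
def Fval (q t : ℕ) {Ω : Type*} [Field Ω] (δ x : Ω) : Ω := x + δ * x ^ q ^ (2 * t)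

/-- `F` applied to a bivariate polynomial. -/
def FP (q t : ℕ) {Ω : Type*} [Field Ω] (δ : Ω) (u : MvPolynomial (Fin 2) Ω) :
    MvPolynomial (Fin 2) Ω := u + C δ * u ^ q ^ (2 * t)

/-- The affine equation `F_C(X,Y)` of the curve `C`. -/
def FCg (q t k : ℕ) {Ω : Type*} [Field Ω] (δ : Ω) (g : ℕ → Ω) (l : Ω) :
    MvPolynomial (Fin 2) Ω :=
  Matrix.det !![(X 0) ^ q ^ t, FP q t δ (X 0), GPg q k g (X 0);
                (X 1) ^ q ^ t, FP q t δ (X 1), GPg q k g (X 1);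
                C (l ^ q ^ t), C (Fval q t δ l), C (Gvalg q k g l)]

namespace MvPolynomial

variable {σ R : Type*}

section CommSemiring

variable [CommSemiring R]

theorem homogeneousComponent_add_mul_of_totalDegree_le {p r : MvPolynomial σ R} {a b : ℕ}
    (hp : p.totalDegree ≤ a) (hr : r.totalDegree ≤ b) :
    homogeneousComponent (a + b) (p * r) =
      homogeneousComponent a p * homogeneousComponent b r := by
  classical
  ext d
  rw [coeff_homogeneousComponent, coeff_mul, coeff_mul]
  split_ifs with hd
  · refine Finset.sum_congr rfl fun x hx => ?_
    have hsum : x.1.degree + x.2.degree = a + b := by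
      rw [← map_add, Finset.HasAntidiagonal.mem_antidiagonal.mp hx, hd]
    rw [coeff_homogeneousComponent, coeff_homogeneousComponent]
    rcases lt_trichotomy x.1.degree a with h | h | h
    · rw [coeff_eq_zero_of_totalDegree_lt (show r.totalDegree < x.2.degree by omega)]
      simp
    · rw [if_pos h, if_pos (show x.2.degree = b by omega)]
    · rw [coeff_eq_zero_of_totalDegree_lt (show p.totalDegree < x.1.degree by omega)]
      simp
  · refine (Finset.sum_eq_zero fun x hx => ?_).symm
    rw [coeff_homogeneousComponent, coeff_homogeneousComponent]
    split_ifs with h1 h2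
    · exact absurd (by rw [← Finset.HasAntidiagonal.mem_antidiagonal.mp hx, map_add, h1, h2]) hd
    all_goals simp

theorem totalDegree_eq_of_homogeneousComponent_ne_zero {p : MvPolynomial σ R} {n : ℕ}
    (hp : p.totalDegree ≤ n) (h : homogeneousComponent n p ≠ 0) : p.totalDegree = n :=
  hp.antisymm (not_lt.mp fun hlt => h (homogeneousComponent_eq_zero n p hlt))

end CommSemiring

theorem X_pow_mul_X_pow_sub_X_pow_mul_X_pow_ne_zero [CommRing R] [Nontrivial R] {i j : σ}
    (hij : i ≠ j) {a b : ℕ} (hab : a ≠ b) :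
    (X i ^ a * X j ^ b - X i ^ b * X j ^ a : MvPolynomial σ R) ≠ 0 := by
  classical
  simp only [X_pow_eq_monomial, monomial_mul, one_mul]
  refine sub_ne_zero.mpr fun h => hab ?_
  have := DFunLike.congr_fun (monomial_left_injective one_ne_zero h) i
  simpa [Finsupp.single_apply, hij, hij.symm] using this

end MvPolynomial

section Alternant

variable {R : Type*} [CommRing R]

def alternant (u v : MvPolynomial (Fin 2) R → MvPolynomial (Fin 2) R) : MvPolynomial (Fin 2) R :=
  u (X 0) * v (X 1) - v (X 0) * u (X 1)

theorem totalDegree_alternant_le {u v : MvPolynomial (Fin 2) R → MvPolynomial (Fin 2) R}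
    {a b : ℕ} (hu : ∀ j, (u (X j)).totalDegree ≤ a)
    (hv : ∀ j, (v (X j)).totalDegree ≤ b) :
    (alternant u v).totalDegree ≤ a + b :=
  (totalDegree_sub _ _).trans <| max_le
    ((totalDegree_mul _ _).trans (add_le_add (hu 0) (hv 1)))
    ((totalDegree_mul _ _).trans ((add_le_add (hv 0) (hu 1)).trans_eq (add_comm b a)))

theorem homogeneousComponent_alternant
    {u v u' v' : MvPolynomial (Fin 2) R → MvPolynomial (Fin 2) R} {a b n : ℕ} (hab : a + b = n)
    (hu : ∀ j, (u (X j)).totalDegree ≤ a) (hv : ∀ j, (v (X j)).totalDegree ≤ b)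
    (hu' : ∀ j, homogeneousComponent a (u (X j)) = u' (X j))
    (hv' : ∀ j, homogeneousComponent b (v (X j)) = v' (X j)) :
    homogeneousComponent n (alternant u v) = alternant u' v' := by
  rw [alternant, map_sub, ← hab, homogeneousComponent_add_mul_of_totalDegree_le (hu 0) (hv 1),
    add_comm a b, homogeneousComponent_add_mul_of_totalDegree_le (hv 0) (hu 1), hu', hu', hv', hv',
    alternant]

end Alternant

section FCg

variable {Ω : Type*} [Field Ω] {q : ℕ}

theorem totalDegree_FP_X_le (hq : 0 < q) (t : ℕ) (δ : Ω) (j : Fin 2) :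
    (FP q t δ (X j)).totalDegree ≤ q ^ (2 * t) :=
  (totalDegree_add _ _).trans <| max_le
    ((totalDegree_X j).trans_le (Nat.one_le_pow _ _ hq))
    (isHomogeneous_C_mul_X_pow _ _ _).totalDegree_le

theorem homogeneousComponent_FP_X {t : ℕ} (hqt : q ^ (2 * t) ≠ 1) (δ : Ω) (j : Fin 2) :
    homogeneousComponent (q ^ (2 * t)) (FP q t δ (X j)) = C δ * X j ^ q ^ (2 * t) := by
  rw [FP, map_add, homogeneousComponent_of_mem (isHomogeneous_X Ω j), if_neg hqt, zero_add,
    homogeneousComponent_eq_self (isHomogeneous_C_mul_X_pow _ _ _)]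

theorem totalDegree_GPg_X_le (hq : 0 < q) (k : ℕ) (g : ℕ → Ω) (j : Fin 2) :
    (GPg q k g (X j)).totalDegree ≤ q ^ k :=
  totalDegree_finsetSum_le fun _ hi => (isHomogeneous_C_mul_X_pow _ _ _).totalDegree_le.trans
    (Nat.pow_le_pow_right hq (Nat.lt_succ_iff.mp (Finset.mem_range.mp hi)))

theorem homogeneousComponent_GPg_X (hq : 1 < q) (k : ℕ) (g : ℕ → Ω) (j : Fin 2) :
    homogeneousComponent (q ^ k) (GPg q k g (X j)) = C (g k) * X j ^ q ^ k := by
  rw [GPg, Finset.sum_range_succ, map_add, map_sum,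
    homogeneousComponent_eq_self (isHomogeneous_C_mul_X_pow _ _ _), add_eq_right]
  refine Finset.sum_eq_zero fun i hi => ?_
  rw [homogeneousComponent_of_mem (isHomogeneous_C_mul_X_pow _ _ _),
    if_neg (Nat.pow_lt_pow_right hq (Finset.mem_range.mp hi)).ne']

theorem FCg_eq_alternant (t k : ℕ) (δ : Ω) (g : ℕ → Ω) (l : Ω) :
    FCg q t k δ g l = C (l ^ q ^ t) * alternant (FP q t δ) (GPg q k g)
      - C (Fval q t δ l) * alternant (· ^ q ^ t) (GPg q k g)
      + C (Gvalg q k g l) * alternant (· ^ q ^ t) (FP q t δ) := by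
  rw [FCg, Matrix.det_fin_three]
  simp only [Matrix.of_apply, Matrix.cons_val', Matrix.cons_val_zero, Matrix.cons_val_one,
    Matrix.cons_val, Matrix.cons_val_fin_one, alternant]
  ring

theorem totalDegree_FCg_le {t k : ℕ} (hq : 0 < q) (h2tk : 2 * t ≤ k) (δ : Ω) (g : ℕ → Ω)
    (l : Ω) :
    (FCg q t k δ g l).totalDegree ≤ q ^ k + q ^ (2 * t) := by
  have hTs : q ^ t ≤ q ^ (2 * t) := Nat.pow_le_pow_right hq (by omega)
  have hsK : q ^ (2 * t) ≤ q ^ k := Nat.pow_le_pow_right hq h2tk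
  have hX : ∀ j, (X j ^ q ^ t : MvPolynomial (Fin 2) Ω).totalDegree ≤ q ^ t :=
    fun j => (totalDegree_X_pow j _).le
  have hF := totalDegree_FP_X_le hq t δ
  have hG := totalDegree_GPg_X_le hq k g
  have hC : ∀ (c : Ω) {p : MvPolynomial (Fin 2) Ω} {n : ℕ}, p.totalDegree ≤ n →
      (C c * p).totalDegree ≤ n := fun c p n hp => by
    rw [C_mul']; exact (totalDegree_smul_le c p).trans hp
  rw [FCg_eq_alternant]
  refine (totalDegree_add _ _).trans (max_le ((totalDegree_sub _ _).trans (max_le ?_ ?_)) ?_)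
  · exact hC _ ((totalDegree_alternant_le hF hG).trans_eq (add_comm _ _))
  · exact hC _ ((totalDegree_alternant_le hX hG).trans (by omega))
  · exact hC _ ((totalDegree_alternant_le hX hF).trans (by omega))

theorem homogeneousComponent_FCg {t k : ℕ} (hq : 1 < q) (ht : 0 < t) (h2tk : 2 * t < k)
    (δ : Ω) (g : ℕ → Ω) (l : Ω) :
    homogeneousComponent (q ^ k + q ^ (2 * t)) (FCg q t k δ g l) =
      C (l ^ q ^ t * δ * g k) *
        (X 0 ^ q ^ (2 * t) * X 1 ^ q ^ k - X 0 ^ q ^ k * X 1 ^ q ^ (2 * t)) := by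
  have hTs : q ^ t < q ^ (2 * t) := Nat.pow_lt_pow_right hq (by omega)
  have hsK : q ^ (2 * t) < q ^ k := Nat.pow_lt_pow_right hq h2tk
  have hXpow : ∀ {n : ℕ}, n ≠ q ^ t → ∀ j : Fin 2,
      homogeneousComponent n (X j ^ q ^ t : MvPolynomial (Fin 2) Ω) = 0 :=
    fun hn j => by rw [homogeneousComponent_of_mem (isHomogeneous_X_pow j _), if_neg hn]
  have hF := totalDegree_FP_X_le (Nat.zero_lt_of_lt hq) t δ
  have hG := totalDegree_GPg_X_le (Nat.zero_lt_of_lt hq) k g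
  have hF' := homogeneousComponent_FP_X (t := t) (Nat.one_lt_pow (by omega) hq).ne' δ
  have hG' := homogeneousComponent_GPg_X hq k g
  rw [FCg_eq_alternant, map_add, map_sub, homogeneousComponent_C_mul, homogeneousComponent_C_mul,
    homogeneousComponent_C_mul,
    homogeneousComponent_alternant (u' := (C δ * · ^ q ^ (2 * t))) (v' := (C (g k) * · ^ q ^ k))
      (add_comm _ _) hF hG hF' hG',
    homogeneousComponent_alternant (u := (· ^ q ^ t)) (u' := fun _ => 0)
      (v' := (C (g k) * · ^ q ^ k)) (add_comm _ _)
      (fun j => (totalDegree_X_pow j _).trans_le hTs.le) hG (hXpow hTs.ne') hG',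
    homogeneousComponent_alternant (u := (· ^ q ^ t)) (u' := fun _ => 0)
      (v' := (C δ * · ^ q ^ (2 * t))) rfl
      (fun j => (totalDegree_X_pow j _).trans_le (hTs.trans hsK).le) hF
      (hXpow (hTs.trans hsK).ne') hF']
  simp only [alternant, map_mul]
  ring

end FCg

theorem stmt_17_general (q t k : ℕ)
    (F0 : Type) [Field F0] [Fintype F0] (hF0 : Fintype.card F0 = q)
    (ht : 0 < t) (h2tk : 2 * t < k)
    (δ l : AlgebraicClosure F0) (g : ℕ → AlgebraicClosure F0)
    (hδ : δ ≠ 0)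
    (hgk : g k ≠ 0)
    (hlq : l ^ q ≠ l) :
    homogeneousComponent (q ^ k + q ^ (2 * t)) (FCg q t k δ g l)
        = C (l ^ q ^ t * δ * g k)
            * ((X 0) ^ q ^ (2 * t) * (X 1) ^ q ^ k
                - (X 0) ^ q ^ k * (X 1) ^ q ^ (2 * t)) ∧
    (FCg q t k δ g l).totalDegree ≤ q ^ k + q ^ (2 * t) ∧
    (FCg q t k δ g l).totalDegree = q ^ k + q ^ (2 * t) := by
  have hq : 1 < q := hF0 ▸ Fintype.one_lt_card
  have hl : l ≠ 0 := by
    rintro rfl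
    exact hlq (zero_pow (by omega))
  have hcomp := homogeneousComponent_FCg hq ht h2tk δ g l
  have hle := totalDegree_FCg_le (Nat.zero_lt_of_lt hq) h2tk.le δ g l
  refine ⟨hcomp, hle, totalDegree_eq_of_homogeneousComponent_ne_zero hle ?_⟩
  rw [hcomp]
  exact mul_ne_zero (C_ne_zero.mpr (mul_ne_zero (mul_ne_zero (pow_ne_zero _ hl) hδ) hgk))
    (X_pow_mul_X_pow_sub_X_pow_mul_X_pow_ne_zero (by decide) (Nat.pow_lt_pow_right hq h2tk).ne)

/-- In either setting (`G(X) = X^(q^(m₀)) + … + C X^(q^k)` with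
`m₀ ≤ 2t`, `C ≠ 0`, `F(X) = X + δX^(q^(2t))`, `δ ≠ 0`, `0 < 2t < k`): the homogeneous
component of `F_C` of degree `q^k + q^(2t)` equals
`λ^(q^t) δ C (X^(q^(2t)) Y^(q^k) − X^(q^k) Y^(q^(2t)))`, and every monomial of `F_C` has
total degree at most `q^k + q^(2t)`; in particular the total degree is exactly
`q^k + q^(2t)`. -/
theorem stmt_17 (q n t k m0 : ℕ)
    (F0 : Type) [Field F0] [Fintype F0] (hF0 : Fintype.card F0 = q)
    (ht : 0 < t) (h2tk : 2 * t < k) (hkn : k < n) (hm0 : m0 ≤ 2 * t)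
    (δ l : AlgebraicClosure F0) (g : ℕ → AlgebraicClosure F0)
    (hδK : δ ^ q ^ n = δ) (hlK : l ^ q ^ n = l) (hgK : ∀ i, g i ^ q ^ n = g i)
    (hδ : δ ≠ 0)
    (hgm0 : g m0 = 1) (hglow : ∀ i, i < m0 → g i = 0) (hgk : g k ≠ 0)
    (hlq : l ^ q ≠ l)
    (hFl : Fval q t δ l ≠ 0) (hGl : Gvalg q k g l ≠ 0) :
    homogeneousComponent (q ^ k + q ^ (2 * t)) (FCg q t k δ g l)
        = C (l ^ q ^ t * δ * g k)
            * ((X 0) ^ q ^ (2 * t) * (X 1) ^ q ^ k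
                - (X 0) ^ q ^ k * (X 1) ^ q ^ (2 * t)) ∧
    (FCg q t k δ g l).totalDegree ≤ q ^ k + q ^ (2 * t) ∧
    (FCg q t k δ g l).totalDegree = q ^ k + q ^ (2 * t) :=
  stmt_17_general q t k F0 hF0 ht h2tk δ l g hδ hgk hlq

end
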